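/- The number of 312-avoiding alternating permutations of [2k] equals the k-th Catalan number. -/

import Mathlib

/-- The restriction of a collection of finsets to subsets of `I`. -/
def BS.restrict (B : Finset (Finset ℕ)) (I : Finset ℕ) : Finset (Finset ℕ) :=
  B.filter (· ⊆ I)

/-- `B` is a building set on `S`. -/
def BS.IsBuilding (S : Finset ℕ) (B : Finset (Finset ℕ)) : Prop :=
  (∀ J ∈ B, J ⊆ S ∧ J.Nonempty) ∧
  (∀ i ∈ S, ({i} : Finset ℕ) ∈ B) ∧
  (∀ I ∈ B, ∀ J ∈ B, (I ∩ J).Nonempty → I ∪ J ∈ B)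

/-- `B` is chordal: every "suffix" `{x ∈ I : a ≤ x}` of an element `I` is in `B`. -/
def BS.IsChordal (B : Finset (Finset ℕ)) : Prop :=
  ∀ I ∈ B, ∀ a ∈ I, I.filter (fun x => a ≤ x) ∈ B

/-- A connected component of `B`: an inclusion-maximal element. -/
def BS.IsComponent (B : Finset (Finset ℕ)) (C : Finset ℕ) : Prop :=
  C ∈ B ∧ ∀ J ∈ B, C ⊆ J → J = C

/-- The restriction of `B` to `I` has no connected component of odd cardinality. -/
def BS.NoOddComp (B : Finset (Finset ℕ)) (I : Finset ℕ) : Prop :=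
  ∀ C ∈ BS.restrict B I, BS.IsComponent (BS.restrict B I) C → Even C.card

/-- The poset `P̂_B` of subsets of `S` whose restriction has no odd component. -/
def BS.hatP (B : Finset (Finset ℕ)) (S : Finset ℕ) : Set (Finset ℕ) :=
  {I | I ⊆ S ∧ BS.NoOddComp B I}

/-- `L` is a (one-line notation) permutation of the finite set `S`. -/
def BS.IsPermOf (S : Finset ℕ) (L : List ℕ) : Prop :=
  L.Nodup ∧ L.toFinset = S

/-- `L` is a `B`-permutation: each entry lies in the same connected component of the
restriction of `B` to the prefix as the maximum of the prefix. -/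
def BS.IsBPerm (B : Finset (Finset ℕ)) (S : Finset ℕ) (L : List ℕ) : Prop :=
  BS.IsPermOf S L ∧
  ∀ i, i < L.length →
    ∃ C : Finset ℕ, BS.IsComponent (BS.restrict B (L.take (i + 1)).toFinset) C ∧
      L.getD i 0 ∈ C ∧ ∃ M ∈ C, ∀ y ∈ (L.take (i + 1)).toFinset, y ≤ M

/-- `L` is alternating: `x₁ > x₂ < x₃ > x₄ < ⋯`. -/
def BS.IsAlternating (L : List ℕ) : Prop :=
  ∀ i, i + 1 < L.length →
    (i % 2 = 0 → L.getD (i + 1) 0 < L.getD i 0) ∧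
    (i % 2 = 1 → L.getD i 0 < L.getD (i + 1) 0)

/-- `L` is `312`-avoiding: there are no indices `i < j < l` with `L_j < L_l < L_i`. -/
def Avoids312 (L : List ℕ) : Prop :=
  ¬ ∃ i j l, i < j ∧ j < l ∧ l < L.length ∧
    L.getD j 0 < L.getD l 0 ∧ L.getD l 0 < L.getD i 0

/-! The maximum `M` of an alternating `312`-avoiding permutation of `2n + 2` values is its
penultimate entry: at a valley it would be smaller than its predecessor, and at an earlier peak it
would be the `3` of a `312` pattern with the next two entries. If `m` is the last entry, no entry
below `m` can follow an entry above `m` (that would be a `312` ending in `m`), so the permutation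
reads `S ++ T ++ [M, m]` with `S < m < T`, and alternation forces `S` to have even length `2j`.
Then `S` and `T` are alternating `312`-avoiding permutations of intervals of lengths `2j` and
`2(n - j)`, and conversely every such pair glues back; this is the Catalan recurrence
`C (n + 1) = ∑ j, C j * C (n - j)`. -/

open List

namespace BS

theorem isAlternating_nil : IsAlternating [] := fun _ hi => by simp at hi

theorem isAlternating_cons_cons {a b : ℕ} {l : List ℕ} :
    IsAlternating (a :: b :: l) ↔ b < a ∧ (∀ c ∈ l.head?, b < c) ∧ IsAlternating l := by
  have hmod (i : ℕ) : (i + 2) % 2 = i % 2 := by omega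
  constructor
  · intro h
    refine ⟨(h 0 (by simp)).1 rfl, ?_, fun i hi => ?_⟩
    · intro c hc
      obtain ⟨l, rfl⟩ : ∃ l', l = c :: l' := by cases l <;> simp_all
      exact (h 1 (by simp)).2 rfl
    · simpa [hmod] using h (i + 2) (by simp only [length_cons]; omega)
  · rintro ⟨hba, hbc, hl⟩ (_ | _ | i) hi
    · simpa using hba
    · cases l with
      | nil => simp at hi
      | cons c l => simpa using hbc c rfl
    · simpa [hmod] using hl i (by simp only [length_cons] at hi; omega)

theorem isAlternating_append {S T : List ℕ} (hS : Even S.length) :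
    IsAlternating (S ++ T) ↔
      IsAlternating S ∧ IsAlternating T ∧ ∀ x ∈ S.getLast?, ∀ y ∈ T.head?, x < y := by
  induction S using List.twoStepInduction with
  | nil => simp [isAlternating_nil]
  | singleton a => simp at hS
  | cons_cons a b S ih _ =>
    rw [cons_append, cons_append, isAlternating_cons_cons, isAlternating_cons_cons,
      ih (by simpa [Nat.even_add_one] using hS)]
    cases S with
    | nil => simp [isAlternating_nil, and_comm, and_left_comm]
    | cons d S => simp [and_assoc]

theorem even_length_of_isAlternating_append {S R : List ℕ} (h : IsAlternating (S ++ R))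
    (hlt : ∀ x ∈ S, ∀ y ∈ R, x < y) (hR : R ≠ []) : Even S.length := by
  induction S using List.twoStepInduction with
  | nil => simp
  | singleton a =>
    obtain ⟨b, R, rfl⟩ := exists_cons_of_ne_nil hR
    exact absurd (isAlternating_cons_cons.1 h).1 (not_lt.2 (hlt a (by simp) b (by simp)).le)
  | cons_cons a b S ih _ =>
    simpa [Nat.even_add_one] using
      ih (isAlternating_cons_cons.1 h).2.2 (fun x hx => hlt x (by simp [hx]))

theorem IsPermOf.mem_iff {s : Finset ℕ} {L : List ℕ} (h : IsPermOf s L) {x : ℕ} :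
    x ∈ L ↔ x ∈ s := by
  rw [← mem_toFinset, h.2]

theorem IsPermOf.length_eq {s : Finset ℕ} {L : List ℕ} (h : IsPermOf s L) :
    L.length = s.card := by
  rw [← h.2, toFinset_card_of_nodup h.1]

theorem IsPermOf.filter {s : Finset ℕ} {L : List ℕ} (h : IsPermOf s L) (p : ℕ → Bool) :
    IsPermOf (s.filter (p ·)) (L.filter p) :=
  ⟨h.1.filter p, by rw [toFinset_filter, h.2]⟩

theorem IsPermOf.append {s t : Finset ℕ} {A B : List ℕ} (hA : IsPermOf s A) (hB : IsPermOf t B)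
    (hst : Disjoint s t) : IsPermOf (s ∪ t) (A ++ B) :=
  ⟨hA.1.append hB.1 fun _ hxA hxB =>
      Finset.disjoint_left.1 hst (hA.mem_iff.1 hxA) (hB.mem_iff.1 hxB),
    by rw [toFinset_append, hA.2, hB.2]⟩

theorem isPermOf_pair {a b : ℕ} (hab : a ≠ b) : IsPermOf {a, b} [a, b] :=
  ⟨by simpa using hab, by simp⟩

theorem finite_setOf_isPermOf (s : Finset ℕ) : {L | IsPermOf s L}.Finite := by
  refine (Multiset.lists s.val).toFinset.finite_toSet.subset fun L ⟨hnd, hL⟩ => ?_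
  simp [← hL, toFinset_val, hnd.dedup]

end BS

theorem avoids312_iff_sublist {L : List ℕ} :
    Avoids312 L ↔ ¬ ∃ a b c, [a, b, c] <+ L ∧ b < c ∧ c < a := by
  constructor
  · rintro hL ⟨a, b, c, hsub, hbc, hca⟩
    obtain ⟨is, heq, hpw⟩ := sublist_eq_map_getElem hsub
    rcases is with _ | ⟨i, _ | ⟨j, _ | ⟨l, _ | _⟩⟩⟩ <;>
      simp only [map_nil, map_cons, cons.injEq, reduceCtorEq, cons_ne_self, nil_eq, and_false,
        and_true] at heq
    obtain ⟨rfl, rfl, rfl⟩ := heq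
    simp only [pairwise_cons, mem_cons, not_mem_nil] at hpw
    refine hL ⟨i, j, l, hpw.1 j (by simp), hpw.2.1 l (by simp), l.2, ?_⟩
    simpa [getD_eq_getElem] using ⟨hbc, hca⟩
  · rintro h ⟨i, j, l, hij, hjl, hl, hjl', hli⟩
    rw [getD_eq_getElem _ _ hl, getD_eq_getElem _ _ (by omega)] at hjl' hli
    refine h ⟨L[i], L[j], L[l], ?_, hjl', hli⟩
    simpa using map_getElem_sublist (l := L)
      (is := [⟨i, by omega⟩, ⟨j, by omega⟩, ⟨l, hl⟩])
      (by simp only [pairwise_cons, mem_cons, not_mem_nil, or_false, forall_eq_or_imp, forall_eq,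
        Fin.mk_lt_mk, IsEmpty.forall_iff, implies_true, Pairwise.nil, and_true]; omega)

theorem Avoids312.sublist {L L' : List ℕ} (hsub : L' <+ L) (h : Avoids312 L) : Avoids312 L' :=
  avoids312_iff_sublist.2 fun ⟨a, b, c, h', hbc, hca⟩ =>
    avoids312_iff_sublist.1 h ⟨a, b, c, h'.trans hsub, hbc, hca⟩

theorem avoids312_append_of_forall_lt {A B : List ℕ} (hlt : ∀ x ∈ A, ∀ y ∈ B, x < y) :
    Avoids312 (A ++ B) ↔ Avoids312 A ∧ Avoids312 B := by
  refine ⟨fun h => ⟨h.sublist (sublist_append_left ..), h.sublist (sublist_append_right ..)⟩,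
    fun ⟨hA, hB⟩ => avoids312_iff_sublist.2 ?_⟩
  rintro ⟨a, b, c, hsub, hbc, hca⟩
  obtain ⟨l₁, l₂, heq, h₁, h₂⟩ := sublist_append_iff.1 hsub
  rcases l₁ with _ | ⟨x, _ | ⟨y, _ | ⟨z, _ | ⟨w, l₁⟩⟩⟩⟩ <;>
    simp only [nil_append, cons_append, cons.injEq, nil_eq, reduceCtorEq,
      and_false] at heq
  · exact avoids312_iff_sublist.1 hB ⟨a, b, c, heq ▸ h₂, hbc, hca⟩
  · obtain ⟨rfl, rfl⟩ := heq
    exact (hlt a (h₁.subset (by simp)) c (h₂.subset (by simp))).not_gt hca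
  · obtain ⟨rfl, rfl, rfl⟩ := heq
    exact (hlt a (h₁.subset (by simp)) c (h₂.subset (by simp))).not_gt hca
  · obtain ⟨rfl, rfl, rfl, rfl⟩ := heq
    exact avoids312_iff_sublist.1 hA ⟨a, b, c, h₁, hbc, hca⟩

theorem avoids312_append_singleton_of_forall_lt {T : List ℕ} {m : ℕ}
    (hlt : ∀ x ∈ T, m < x) :
    Avoids312 (T ++ [m]) ↔ Avoids312 T := by
  refine ⟨fun h => h.sublist (sublist_append_left T [m]), fun hT => avoids312_iff_sublist.2 ?_⟩
  rintro ⟨a, b, c, hsub, hbc, hca⟩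
  obtain ⟨l₁, l₂, heq, h₁, h₂⟩ := sublist_append_iff.1 hsub
  rcases sublist_singleton.1 h₂ with rfl | rfl
  · exact avoids312_iff_sublist.1 hT ⟨a, b, c, by simpa [heq] using h₁, hbc, hca⟩
  · rcases l₁ with _ | ⟨x, _ | ⟨y, _ | ⟨z, l₁⟩⟩⟩ <;>
      simp only [nil_append, cons_append, cons.injEq, nil_eq, append_eq_nil_iff, cons_ne_self,
        reduceCtorEq, and_false, and_true] at heq
    obtain ⟨rfl, rfl, rfl⟩ := heq
    exact (hlt b (h₁.subset (by simp))).not_gt hbc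

theorem Avoids312.exists_eq_append_of_not_mem {A : List ℕ} {m : ℕ} (h : Avoids312 (A ++ [m]))
    (hm : m ∉ A) : ∃ S T, A = S ++ T ∧ (∀ x ∈ S, x < m) ∧ ∀ y ∈ T, m < y := by
  refine ⟨A.takeWhile (· < m), A.dropWhile (· < m), takeWhile_append_dropWhile.symm,
    fun x hx => by simpa using mem_takeWhile_imp hx, fun y hy => ?_⟩
  obtain ⟨t, T, hT⟩ := exists_cons_of_ne_nil (ne_nil_of_mem hy)
  have htA : t :: T <+ A := hT ▸ dropWhile_sublist _
  have hmt : m < t := by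
    have := head_dropWhile_not (fun x => decide (x < m)) (l := A) (by rw [hT]; simp)
    simp only [hT, head_cons, decide_eq_false_iff_not, not_lt] at this
    exact this.lt_of_ne fun hmt => hm (hmt ▸ htA.subset (mem_cons_self ..))
  rcases mem_cons.1 (hT ▸ hy) with rfl | hyT
  · exact hmt
  have hyA : y ∈ A := htA.subset (mem_cons_of_mem t hyT)
  refine lt_of_le_of_ne (not_lt.1 fun hym => avoids312_iff_sublist.1 h ⟨t, y, m, ?_, hym, hmt⟩)
    fun hmy => hm (hmy ▸ hyA)
  exact ((cons_sublist_cons.2 (singleton_sublist.2 hyT)).trans htA).append (Sublist.refl [m])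

theorem Avoids312.exists_eq_append_of_forall_le {L : List ℕ} {M : ℕ} (hav : Avoids312 L)
    (halt : BS.IsAlternating L) (heven : Even L.length) (hM : M ∈ L)
    (hmax : ∀ x ∈ L, x ≤ M) :
    ∃ A m, L = A ++ [M, m] := by
  induction L using List.twoStepInduction with
  | nil => simp at hM
  | singleton a => simp at heven
  | cons_cons a b L ih _ =>
    obtain ⟨hba, hbL, haltL⟩ := BS.isAlternating_cons_cons.1 halt
    by_cases hML : M ∈ L
    · obtain ⟨A, m, rfl⟩ :=
        ih (hav.sublist ((sublist_cons_self b L).trans (sublist_cons_self a _)))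
        haltL (by simpa [Nat.even_add_one] using heven) hML (fun x hx => hmax x (by simp [hx]))
      exact ⟨a :: b :: A, m, rfl⟩
    obtain rfl : M = a := by
      simp only [mem_cons, hML, or_false] at hM
      rcases hM with rfl | rfl
      · rfl
      · exact absurd (hmax a (by simp)) (not_le.2 hba)
    cases L with
    | nil => exact ⟨[], b, rfl⟩
    | cons c L =>
      have hca : c < M := (hmax c (by simp)).lt_of_ne fun hcM => hML (by simp [hcM])
      exact absurd ⟨M, b, c, by simp, hbL c rfl, hca⟩ (avoids312_iff_sublist.1 hav)

theorem BS.IsPermOf.exists_eq_append_pair {s : Finset ℕ} {L : List ℕ} {M : ℕ}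
    (hp : IsPermOf s L) (halt : IsAlternating L) (hav : Avoids312 L) (heven : Even L.length)
    (hM : M ∈ s) (hmax : ∀ x ∈ s, x ≤ M) :
    ∃ S T m, L = S ++ T ++ [M, m] ∧ IsPermOf (s.filter (· < m)) S ∧
      IsPermOf (s.filter fun x => m < x ∧ x < M) T := by
  obtain ⟨A, m, rfl⟩ := hav.exists_eq_append_of_forall_le halt heven (hp.mem_iff.2 hM)
    fun x hx => hmax x (hp.mem_iff.1 hx)
  obtain ⟨-, hMm, hAMm⟩ := nodup_append.1 hp.1
  have hmM : m < M := (hmax m (hp.mem_iff.1 (by simp))).lt_of_ne fun h => by simp [h] at hMm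
  obtain ⟨S, T, rfl, hSm, hTm⟩ := (hav.sublist ((sublist_cons_self M [m]).append_left A))
    |>.exists_eq_append_of_not_mem fun h => hAMm m h m (by simp) rfl
  have hTM (y) (hy : y ∈ T) : y < M := (hmax y (hp.mem_iff.1 (by simp [hy]))).lt_of_ne
    fun h => hAMm M (by simp [← h, hy]) M (by simp) rfl
  refine ⟨S, T, m, rfl, ?_, ?_⟩
  · convert hp.filter (· < m) using 1
    · simp
    rw [filter_append, filter_append, filter_eq_self.2 (by simpa using hSm),
      filter_eq_nil_iff.2 fun y hy => by simpa using (hTm y hy).le,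
      filter_eq_nil_iff.2 fun y hy => by
        simp only [mem_cons, not_mem_nil, or_false, decide_eq_true_eq, not_lt] at hy ⊢; omega,
      append_nil, append_nil]
  · convert hp.filter (fun x => m < x ∧ x < M) using 1
    · simp
    rw [filter_append, filter_append,
      filter_eq_nil_iff.2 fun y hy => by simpa using fun h => absurd (hSm y hy) (not_lt.2 h.le),
      filter_eq_self.2 fun y hy => by simpa using ⟨hTm y hy, hTM y hy⟩,
      filter_eq_nil_iff.2 fun y hy => by
        simp only [mem_cons, not_mem_nil, or_false, Bool.decide_and, Bool.and_eq_true,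
          decide_eq_true_eq] at hy ⊢; omega,
      nil_append, append_nil]

/-- Shifting the values by `c` keeps the blocks of the recursive decomposition in the family. -/
def avoidingAlternating (c n : ℕ) : Set (List ℕ) :=
  {L | BS.IsPermOf (Finset.Icc (c + 1) (c + 2 * n)) L ∧ BS.IsAlternating L ∧ Avoids312 L}

theorem length_of_mem_avoidingAlternating {c n : ℕ} {L : List ℕ}
    (h : L ∈ avoidingAlternating c n) : L.length = 2 * n := by
  rw [h.1.length_eq]; simp

theorem append_mem_avoidingAlternating {c n j : ℕ} {S T : List ℕ} (hj : j ≤ n)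
    (hS : S ∈ avoidingAlternating c j) (hT : T ∈ avoidingAlternating (c + 2 * j + 1) (n - j)) :
    S ++ T ++ [c + 2 * n + 2, c + 2 * j + 1] ∈ avoidingAlternating c (n + 1) := by
  obtain ⟨hSp, hSa, hSv⟩ := hS
  obtain ⟨hTp, hTa, hTv⟩ := hT
  have hS (x) (hx : x ∈ S) := Finset.mem_Icc.1 (hSp.mem_iff.1 hx)
  have hT (x) (hx : x ∈ T) := Finset.mem_Icc.1 (hTp.mem_iff.1 hx)
  have hTM (x) (hx : x ∈ T) (y) (hy : y ∈ [c + 2 * n + 2]) : x < y := by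
    rw [mem_singleton] at hy; have := hT x hx; omega
  have hmTM (x) (hx : x ∈ T ++ [c + 2 * n + 2]) : c + 2 * j + 1 < x := by
    rcases mem_append.1 hx with hx | hx
    · have := hT x hx; omega
    · rw [mem_singleton] at hx; omega
  have hSTMm (x) (hx : x ∈ S) (y) (hy : y ∈ T ++ [c + 2 * n + 2, c + 2 * j + 1]) : x < y := by
    have := hS x hx
    rcases mem_append.1 hy with hy | hy
    · have := hT y hy; omega
    · simp only [mem_cons, not_mem_nil, or_false] at hy; omega
  rw [append_assoc]
  refine ⟨?_, ?_, ?_⟩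
  · convert hSp.append (hTp.append (BS.isPermOf_pair (a := c + 2 * n + 2) (b := c + 2 * j + 1)
      (by omega)) ?_) ?_ using 1
    · ext x
      simp only [Finset.mem_union, Finset.mem_Icc, Finset.mem_insert, Finset.mem_singleton]
      omega
    all_goals
      refine Finset.disjoint_left.2 fun x hx hx' => ?_
      simp only [Finset.mem_union, Finset.mem_Icc, Finset.mem_insert, Finset.mem_singleton]
        at hx hx'
      omega
  · have hSe : Even S.length := by rw [hSp.length_eq]; simp
    have hTe : Even T.length := by rw [hTp.length_eq]; simp
    refine (BS.isAlternating_append hSe).2 ⟨hSa, (BS.isAlternating_append hTe).2 ⟨hTa, ?_,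
      fun x hx y hy => hTM x (mem_of_mem_getLast? hx) y (by simpa [eq_comm] using hy)⟩,
      fun x hx y hy => hSTMm x (mem_of_mem_getLast? hx) y (mem_of_mem_head? hy)⟩
    exact BS.isAlternating_cons_cons.2 ⟨by omega, by simp, BS.isAlternating_nil⟩
  · refine (avoids312_append_of_forall_lt hSTMm).2 ⟨hSv, ?_⟩
    rw [← singleton_append, ← append_assoc]
    refine (avoids312_append_singleton_of_forall_lt hmTM).2
      ((avoids312_append_of_forall_lt hTM).2 ⟨hTv, ?_⟩)
    exact avoids312_iff_sublist.2 fun ⟨_, _, _, h, _⟩ => by simpa using h.length_le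

theorem exists_eq_append_of_mem_avoidingAlternating_succ {c n : ℕ} {L : List ℕ}
    (hL : L ∈ avoidingAlternating c (n + 1)) :
    ∃ j ≤ n, ∃ S ∈ avoidingAlternating c j,
      ∃ T ∈ avoidingAlternating (c + 2 * j + 1) (n - j),
        L = S ++ T ++ [c + 2 * n + 2, c + 2 * j + 1] := by
  obtain ⟨hp, halt, hav⟩ := hL
  obtain ⟨S, T, m, rfl, hSp, hTp⟩ := hp.exists_eq_append_pair (M := c + 2 * n + 2) halt hav
    (by rw [hp.length_eq]; simp) (Finset.mem_Icc.2 (by omega))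
    fun x hx => by rw [Finset.mem_Icc] at hx; omega
  have hm := Finset.mem_Icc.1 (hp.mem_iff.1 (by simp : m ∈ S ++ T ++ [c + 2 * n + 2, m]))
  rw [show (Finset.Icc (c + 1) (c + 2 * (n + 1))).filter (· < m) = Finset.Icc (c + 1) (m - 1) by
    ext; simp only [Finset.mem_filter, Finset.mem_Icc]; omega] at hSp
  rw [show (Finset.Icc (c + 1) (c + 2 * (n + 1))).filter (fun x => m < x ∧ x < c + 2 * n + 2) =
    Finset.Icc (m + 1) (c + 2 * n + 1) by
      ext; simp only [Finset.mem_filter, Finset.mem_Icc]; omega] at hTp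
  rw [append_assoc] at halt hav
  have hSe : Even S.length := by
    refine BS.even_length_of_isAlternating_append halt (fun x hx y hy => ?_) (by simp)
    have := Finset.mem_Icc.1 (hSp.mem_iff.1 hx)
    rcases mem_append.1 hy with hy | hy
    · have := Finset.mem_Icc.1 (hTp.mem_iff.1 hy); omega
    · simp only [mem_cons, not_mem_nil, or_false] at hy; omega
  obtain ⟨hSa, hTa, -⟩ := (BS.isAlternating_append hSe).1 halt
  obtain ⟨j, hj⟩ := hSe
  have hlenS := hSp.length_eq
  have hlenT := hTp.length_eq
  have hlen := hp.length_eq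
  simp only [length_append, length_cons, length_nil, Nat.card_Icc] at hlenS hlenT hlen
  obtain rfl : m = c + 2 * j + 1 := by omega
  refine ⟨j, by omega, S, ⟨by simpa using hSp, hSa, hav.sublist (sublist_append_left _ _)⟩,
    T, ⟨?_, ((BS.isAlternating_append ⟨n - j, by omega⟩).1 hTa).1,
      hav.sublist ((sublist_append_left T _).trans (sublist_append_right S _))⟩, rfl⟩
  convert hTp using 2; omega

theorem avoidingAlternating_zero (c : ℕ) : avoidingAlternating c 0 = {[]} := by
  ext L
  constructor
  · rintro ⟨hp, -, -⟩
    simpa using hp.length_eq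
  · rintro rfl
    exact ⟨⟨nodup_nil, by simp⟩, BS.isAlternating_nil,
      fun ⟨_, _, _, _, _, hl, _⟩ => by simp at hl⟩

instance (c n : ℕ) : Finite (avoidingAlternating c n) :=
  ((BS.finite_setOf_isPermOf _).subset fun _ hL => hL.1).to_subtype

noncomputable def avoidingAlternatingSuccEquiv (c n : ℕ) :
    (Σ j : Fin (n + 1), avoidingAlternating c j × avoidingAlternating (c + 2 * j + 1) (n - j)) ≃
      avoidingAlternating c (n + 1) :=
  Equiv.ofBijective
    (fun ⟨j, S, T⟩ => ⟨S.1 ++ T.1 ++ [c + 2 * n + 2, c + 2 * j + 1],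
      append_mem_avoidingAlternating j.is_le S.2 T.2⟩)
    ⟨by
      rintro ⟨j, S, T⟩ ⟨j', S', T'⟩ h
      simp only [Subtype.mk.injEq] at h
      obtain rfl : j = j' := Fin.ext (by simpa using congrArg getLast? h)
      obtain ⟨h, -⟩ := append_inj' h rfl
      obtain ⟨hS, hT⟩ := append_inj h (by
        rw [length_of_mem_avoidingAlternating S.2, length_of_mem_avoidingAlternating S'.2])
      obtain rfl := Subtype.ext hS
      obtain rfl := Subtype.ext hT
      rfl,
    by
      rintro ⟨L, hL⟩
      obtain ⟨j, hj, S, hS, T, hT, rfl⟩ := exists_eq_append_of_mem_avoidingAlternating_succ hL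
      exact ⟨⟨⟨j, by omega⟩, ⟨S, hS⟩, ⟨T, hT⟩⟩, rfl⟩⟩

theorem ncard_avoidingAlternating (c n : ℕ) : (avoidingAlternating c n).ncard = catalan n := by
  induction n using Nat.strong_induction_on generalizing c with
  | _ n ih =>
    rcases n with _ | n
    · simp [avoidingAlternating_zero]
    rw [← Nat.card_coe_set_eq, ← Nat.card_congr (avoidingAlternatingSuccEquiv c n),
      Nat.card_sigma, catalan_succ]
    refine Finset.sum_congr rfl fun j _ => ?_
    rw [Nat.card_prod, Nat.card_coe_set_eq, Nat.card_coe_set_eq, ih j (by omega),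
      ih (n - j) (by omega)]

/-- The number of `312`-avoiding alternating permutations of `{1,…,2k}` equals the
`k`-th Catalan number. -/
theorem card_avoiding_alternating_eq_catalan (k : ℕ) :
    Set.ncard {L : List ℕ | BS.IsPermOf (Finset.Icc 1 (2 * k)) L ∧
      BS.IsAlternating L ∧ Avoids312 L} = catalan k := by
  simpa [avoidingAlternating] using ncard_avoidingAlternating 0 k
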